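/- Let P be the uniform distribution on the closed interval [a,b] and let c,d ∈ [a,b] with a < c < d < b. For n ∈ ℕ with n ≥ 2, let α_n be a conditional unconstrained optimal set of n-points for P with respect to the conditional set β = {c,d} such that α_n contains k elements of [a,c], ℓ elements of [c,d], and m elements of [d,b] for some k,ℓ,m ∈ ℕ with k,m ≥ 1 and ℓ ≥ 2. Then k+ℓ+m = n+2, α_n ∩ [a,c] = {a + (2j−1)(c−a)/(2k−1) : 1 ≤ j ≤ k}, α_n ∩ [c,d] = {c + ((j−1)/(ℓ−1))(d−c) : 1 ≤ j ≤ ℓ}, α_n ∩ [d,b] = {d + 2(j−1)(b−d)/(2m−1) : 1 ≤ j ≤ m}, and the n-th conditional unconstrained quantization error equals (1/(3(b−a)))·((c−a)³/(2k−1)² + (1/4)·(d−c)³/(ℓ−1)² + (b−d)³/(2m−1)²). -/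

import Mathlib

/-!
Write `sqInfDist Q x` for the squared distance from `x` to `Q`. An inner cell of length `t`
between consecutive points contributes `t³ / 12` to `∫ sqInfDist Q`, a free end cell `t³ / 3`.
Peeling off the least point and using the weighted convexity inequality
`(t + s)³ / (p + r)² ≤ t³ / p² + s³ / r²` (equality iff `t / p = s / r`), one shows by
induction that among `N` points of `[u, v]` containing `u` and `v` the equispaced grid is the
unique minimiser, and likewise with only one end point prescribed. Projecting an optimal
configuration onto `[a, c]`, `[c, d]` and `[d, b]` lowers the error on each piece and uses at
most `n + 2` points altogether, while the union of the three optimal grids is an admissible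
competitor; hence all these inequalities are equalities. Finally one more point in `[a, c]`
would strictly lower the error, so exactly `n + 2` points are used.
-/

open MeasureTheory Set Filter

/-- The uniform distribution on `[a, b]`: normalized Lebesgue measure restricted to `[a, b]`. -/
noncomputable def uniformOn (a b : ℝ) : Measure ℝ :=
  (ENNReal.ofReal (b - a))⁻¹ • volume.restrict (Set.Icc a b)

/-- The distortion error of a set `s` of points for the measure `P`:
`∫ min_{a ∈ s} (x - a)² dP(x)`. -/
noncomputable def distortion (P : Measure ℝ) (s : Set ℝ) : ℝ :=
  ∫ x, sInf ((fun a => (x - a) ^ 2) '' s) ∂P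

/-- The `n`-th conditional (unconstrained) quantization error for `P` with respect to
the conditional set `β`. -/
noncomputable def condQuantError (P : Measure ℝ) (β : Set ℝ) (n : ℕ) : ℝ :=
  sInf { v : ℝ | ∃ α : Set ℝ, α.Finite ∧ α.ncard ≤ n - β.ncard ∧ v = distortion P (α ∪ β) }

open scoped Pointwise

noncomputable def sqInfDist (Q : Set ℝ) (x : ℝ) : ℝ :=
  sInf ((fun q => (x - q) ^ 2) '' Q)

section sqInfDist

variable {Q Q' : Set ℝ} {p q u v x : ℝ}

lemma bddBelow_image_sub_sq (Q : Set ℝ) (x : ℝ) : BddBelow ((fun q => (x - q) ^ 2) '' Q) :=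
  ⟨0, by rintro _ ⟨q, -, rfl⟩; positivity⟩

lemma sqInfDist_le (hq : q ∈ Q) (x : ℝ) : sqInfDist Q x ≤ (x - q) ^ 2 :=
  csInf_le (bddBelow_image_sub_sq Q x) ⟨q, hq, rfl⟩

lemma le_sqInfDist {r : ℝ} (hQ : Q.Nonempty) (h : ∀ q ∈ Q, r ≤ (x - q) ^ 2) :
    r ≤ sqInfDist Q x :=
  le_csInf (hQ.image _) (by rintro _ ⟨q, hq, rfl⟩; exact h q hq)

lemma sqInfDist_nonneg (Q : Set ℝ) (x : ℝ) : 0 ≤ sqInfDist Q x :=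
  Real.sInf_nonneg (by rintro _ ⟨q, -, rfl⟩; positivity)

lemma sqInfDist_anti (h : Q ⊆ Q') (hQ : Q.Nonempty) (x : ℝ) :
    sqInfDist Q' x ≤ sqInfDist Q x :=
  le_sqInfDist hQ fun _ hq => sqInfDist_le (h hq) x

lemma sqInfDist_eq_of_forall_le (hq : q ∈ Q) (h : ∀ p ∈ Q, (x - q) ^ 2 ≤ (x - p) ^ 2) :
    sqInfDist Q x = (x - q) ^ 2 :=
  (sqInfDist_le hq x).antisymm (le_sqInfDist ⟨q, hq⟩ h)

lemma sqInfDist_eq_of_le_of_subset_Ici (hq : q ∈ Q) (hQq : Q ⊆ Ici q) (hx : x ≤ q) :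
    sqInfDist Q x = (x - q) ^ 2 :=
  sqInfDist_eq_of_forall_le hq fun p hp => by
    have : q ≤ p := hQq hp
    nlinarith

lemma sqInfDist_singleton (q x : ℝ) : sqInfDist {q} x = (x - q) ^ 2 := by
  simp [sqInfDist]

lemma sqInfDist_insert (hQ : Q.Nonempty) (p x : ℝ) :
    sqInfDist (insert p Q) x = min ((x - p) ^ 2) (sqInfDist Q x) := by
  rw [sqInfDist, image_insert_eq, csInf_insert (bddBelow_image_sub_sq Q x) (hQ.image _)]
  rfl

lemma sqInfDist_pair (p q x : ℝ) : sqInfDist {p, q} x = min ((x - p) ^ 2) ((x - q) ^ 2) := by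
  rw [sqInfDist_insert (singleton_nonempty q), sqInfDist_singleton]

lemma sqInfDist_eq_infDist_sq (hQ : Q.Finite) (hne : Q.Nonempty) (x : ℝ) :
    sqInfDist Q x = Metric.infDist x Q ^ 2 := by
  obtain ⟨q, hq, hdist⟩ := hQ.isCompact.exists_infDist_eq_dist hne x
  have hsq : ∀ p, (x - p) ^ 2 = dist x p ^ 2 := fun p => by rw [Real.dist_eq, sq_abs]
  rw [hdist, ← hsq]
  refine sqInfDist_eq_of_forall_le hq fun p hp => ?_
  rw [hsq, hsq, ← hdist]
  exact pow_le_pow_left₀ Metric.infDist_nonneg (Metric.infDist_le_dist_of_mem hp) 2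

lemma continuous_sqInfDist (hQ : Q.Finite) (hne : Q.Nonempty) : Continuous (sqInfDist Q) := by
  rw [funext (sqInfDist_eq_infDist_sq hQ hne)]
  exact (Metric.continuous_infDist_pt Q).pow 2

lemma sqInfDist_neg (Q : Set ℝ) (x : ℝ) : sqInfDist (-Q) x = sqInfDist Q (-x) := by
  rw [sqInfDist, sqInfDist, ← image_neg_eq_neg, image_image]
  congr 2
  funext q
  ring

end sqInfDist

section integrals

variable {Q : Set ℝ} {q u v : ℝ}

lemma integral_sub_sq (u v q : ℝ) :
    ∫ x in u..v, (x - q) ^ 2 = ((v - q) ^ 3 - (u - q) ^ 3) / 3 := by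
  rw [intervalIntegral.integral_comp_sub_right (fun y => y ^ 2), integral_pow]
  norm_num

lemma integral_min_sub_sq (huv : u ≤ v) :
    ∫ x in u..v, min ((x - u) ^ 2) ((x - v) ^ 2) = (v - u) ^ 3 / 12 := by
  have hf : Continuous fun x : ℝ => min ((x - u) ^ 2) ((x - v) ^ 2) := by fun_prop
  set w := (u + v) / 2 with hw
  have huw : u ≤ w := by linarith
  have hwv : w ≤ v := by linarith
  have hleft : ∫ x in u..w, min ((x - u) ^ 2) ((x - v) ^ 2) = ∫ x in u..w, (x - u) ^ 2 :=
    intervalIntegral.integral_congr fun x hx => by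
      rw [uIcc_of_le huw] at hx
      exact min_eq_left (by nlinarith [hx.1, hx.2])
  have hright : ∫ x in w..v, min ((x - u) ^ 2) ((x - v) ^ 2) = ∫ x in w..v, (x - v) ^ 2 :=
    intervalIntegral.integral_congr fun x hx => by
      rw [uIcc_of_le hwv] at hx
      exact min_eq_right (by nlinarith [hx.1, hx.2])
  rw [← intervalIntegral.integral_add_adjacent_intervals (hf.intervalIntegrable u w)
    (hf.intervalIntegrable w v), hleft, hright, integral_sub_sq, integral_sub_sq]
  ring

lemma integral_sqInfDist_pair (huv : u ≤ v) :
    ∫ x in u..v, sqInfDist {u, v} x = (v - u) ^ 3 / 12 := by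
  simp only [sqInfDist_pair]
  exact integral_min_sub_sq huv

lemma integral_sqInfDist_of_le_min (hQ : Q.Finite) (hq : q ∈ Q) (hQq : Q ⊆ Ici q)
    (huq : u ≤ q) (v : ℝ) :
    ∫ x in u..v, sqInfDist Q x = (q - u) ^ 3 / 3 + ∫ x in q..v, sqInfDist Q x := by
  have hf := continuous_sqInfDist hQ ⟨q, hq⟩
  rw [← intervalIntegral.integral_add_adjacent_intervals (hf.intervalIntegrable u q)
    (hf.intervalIntegrable q v)]
  congr 1
  rw [intervalIntegral.integral_congr (g := fun x => (x - q) ^ 2) fun x hx =>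
    sqInfDist_eq_of_le_of_subset_Ici hq hQq (by rw [uIcc_of_le huq] at hx; exact hx.2),
    integral_sub_sq]
  ring

lemma integral_sqInfDist_insert (hQ : Q.Finite) (hq : q ∈ Q) (hQq : Q ⊆ Ici q) (huq : u ≤ q)
    (hqv : q ≤ v) :
    ∫ x in u..v, sqInfDist (insert u Q) x = (q - u) ^ 3 / 12 + ∫ x in q..v, sqInfDist Q x := by
  have hf := continuous_sqInfDist (hQ.insert u) (insert_nonempty u Q)
  rw [← intervalIntegral.integral_add_adjacent_intervals (hf.intervalIntegrable u q)
    (hf.intervalIntegrable q v)]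
  congr 1
  · rw [← integral_min_sub_sq huq]
    refine intervalIntegral.integral_congr fun x hx => ?_
    rw [uIcc_of_le huq] at hx
    rw [sqInfDist_insert ⟨q, hq⟩, sqInfDist_eq_of_le_of_subset_Ici hq hQq hx.2]
  · refine intervalIntegral.integral_congr fun x hx => ?_
    rw [uIcc_of_le hqv] at hx
    have hfar : sqInfDist Q x ≤ (x - u) ^ 2 :=
      (sqInfDist_le hq x).trans (by nlinarith [hx.1])
    rw [sqInfDist_insert ⟨q, hq⟩, min_eq_right hfar]

lemma integral_sqInfDist_neg (Q : Set ℝ) (u v : ℝ) :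
    ∫ x in u..v, sqInfDist Q x = ∫ x in -v..-u, sqInfDist (-Q) x := by
  simp only [← intervalIntegral.integral_comp_neg, sqInfDist_neg, neg_neg]

end integrals

noncomputable def midGrid (u v : ℝ) (N : ℕ) : Set ℝ :=
  (fun j : ℕ => u + (((j : ℝ) - 1) / ((N : ℝ) - 1)) * (v - u)) '' Icc 1 N

noncomputable def leftGrid (u v : ℝ) (k : ℕ) : Set ℝ :=
  (fun j : ℕ => u + (2 * (j : ℝ) - 1) * (v - u) / (2 * (k : ℝ) - 1)) '' Icc 1 k

noncomputable def rightGrid (u v : ℝ) (m : ℕ) : Set ℝ :=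
  (fun j : ℕ => u + 2 * ((j : ℝ) - 1) * (v - u) / (2 * (m : ℝ) - 1)) '' Icc 1 m

section grids

variable {u v : ℝ} {k m N : ℕ}

lemma ncard_image_Icc_one_le (f : ℕ → ℝ) (N : ℕ) : (f '' Icc 1 N).ncard ≤ N :=
  (ncard_image_le (finite_Icc 1 N)).trans (by simp [ncard_eq_toFinset_card'])

lemma midGrid_finite (u v : ℝ) (N : ℕ) : (midGrid u v N).Finite := (finite_Icc 1 N).image _

lemma leftGrid_finite (u v : ℝ) (k : ℕ) : (leftGrid u v k).Finite := (finite_Icc 1 k).image _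

lemma rightGrid_finite (u v : ℝ) (m : ℕ) : (rightGrid u v m).Finite := (finite_Icc 1 m).image _

lemma left_mem_midGrid (hN : 1 ≤ N) : u ∈ midGrid u v N :=
  ⟨1, ⟨le_rfl, hN⟩, by simp⟩

lemma right_mem_midGrid (hN : 2 ≤ N) : v ∈ midGrid u v N := by
  have : (N : ℝ) - 1 ≠ 0 := by
    have : (2 : ℝ) ≤ N := by exact_mod_cast hN
    linarith
  exact ⟨N, ⟨by omega, le_rfl⟩, by field_simp; ring⟩

lemma midGrid_subset_Icc (huv : u ≤ v) : midGrid u v N ⊆ Icc u v := by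
  rintro _ ⟨j, ⟨hj1, hjN⟩, rfl⟩
  have hj : (1 : ℝ) ≤ j := by exact_mod_cast hj1
  have hjN : (j : ℝ) ≤ N := by exact_mod_cast hjN
  have h0 : 0 ≤ ((j : ℝ) - 1) / ((N : ℝ) - 1) := div_nonneg (by linarith) (by linarith)
  have h1 : ((j : ℝ) - 1) / ((N : ℝ) - 1) ≤ 1 :=
    div_le_one_of_le₀ (by linarith) (by linarith)
  constructor <;> nlinarith

lemma midGrid_two : midGrid u v 2 = {u, v} := by
  ext x
  simp only [midGrid, mem_image, mem_Icc, mem_insert_iff, mem_singleton_iff]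
  constructor
  · rintro ⟨j, ⟨hj1, hj2⟩, rfl⟩
    interval_cases j <;> norm_num
  · rintro (rfl | rfl)
    · exact ⟨1, by norm_num⟩
    · exact ⟨2, by norm_num⟩

lemma insert_midGrid (hN : 2 ≤ N) :
    insert u (midGrid (u + (v - u) / N) v N) = midGrid u v (N + 1) := by
  have hN0 : (N : ℝ) ≠ 0 := by positivity
  have hN1 : (N : ℝ) - 1 ≠ 0 := by
    have : (2 : ℝ) ≤ N := by exact_mod_cast hN
    linarith
  have hshift : ∀ i : ℝ, u + (v - u) / N + (i - 1) / (N - 1) * (v - (u + (v - u) / N))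
      = u + i * (v - u) / N := fun i => by
    field_simp
    ring
  ext x
  simp only [midGrid, mem_image, mem_insert_iff, mem_Icc]
  constructor
  · rintro (rfl | ⟨i, ⟨hi1, hiN⟩, rfl⟩)
    · exact ⟨1, ⟨le_rfl, by omega⟩, by simp⟩
    · refine ⟨i + 1, ⟨by omega, by omega⟩, ?_⟩
      push_cast
      rw [hshift, add_sub_cancel_right, add_sub_cancel_right]
      ring
  · rintro ⟨i, ⟨hi1, hiN⟩, rfl⟩
    obtain rfl | hi1 := hi1.eq_or_lt
    · left
      simp
    · right
      refine ⟨i - 1, ⟨by omega, by omega⟩, ?_⟩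
      rw [Nat.cast_sub hi1.le, hshift]
      push_cast
      rw [add_sub_cancel_right]
      ring

lemma leftGrid_one : leftGrid u v 1 = {v} := by
  ext x
  simp only [leftGrid, mem_image, mem_Icc, mem_singleton_iff]
  constructor
  · rintro ⟨j, ⟨hj1, hj2⟩, rfl⟩
    interval_cases j
    norm_num
  · rintro rfl
    exact ⟨1, by norm_num⟩

lemma leftGrid_eq_midGrid (hk : 2 ≤ k) :
    leftGrid u v k = midGrid (u + (v - u) / (2 * k - 1)) v k := by
  have hk : (2 : ℝ) ≤ k := by exact_mod_cast hk
  have h1 : (k : ℝ) - 1 ≠ 0 := by linarith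
  have h2 : 2 * (k : ℝ) - 1 ≠ 0 := by linarith
  refine image_congr fun j _ => ?_
  field_simp
  ring

lemma right_mem_leftGrid (hk : 1 ≤ k) : v ∈ leftGrid u v k := by
  have : 2 * (k : ℝ) - 1 ≠ 0 := by
    have : (1 : ℝ) ≤ k := by exact_mod_cast hk
    linarith
  exact ⟨k, ⟨hk, le_rfl⟩, by field_simp; ring⟩

lemma left_notMem_leftGrid (huv : u < v) : u ∉ leftGrid u v k := by
  rintro ⟨j, ⟨hj1, hjk⟩, hj⟩
  have hj1 : (1 : ℝ) ≤ j := by exact_mod_cast hj1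
  have hjk : (j : ℝ) ≤ k := by exact_mod_cast hjk
  have : 0 < (2 * (j : ℝ) - 1) * (v - u) / (2 * (k : ℝ) - 1) :=
    div_pos (mul_pos (by linarith) (by linarith)) (by linarith)
  linarith

lemma neg_rightGrid : -rightGrid u v m = leftGrid (-v) (-u) m := by
  ext x
  simp only [rightGrid, leftGrid, Set.mem_neg, mem_image, mem_Icc]
  constructor
  · rintro ⟨j, ⟨hj1, hjm⟩, hj⟩
    have h : 2 * (m : ℝ) - 1 ≠ 0 := by
      have : (1 : ℝ) ≤ m := by exact_mod_cast hj1.trans hjm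
      linarith
    refine ⟨m + 1 - j, ⟨by omega, by omega⟩, ?_⟩
    rw [← neg_neg x, ← hj, Nat.cast_sub (by omega)]
    push_cast
    field_simp
    ring
  · rintro ⟨j, ⟨hj1, hjm⟩, rfl⟩
    have h : 2 * (m : ℝ) - 1 ≠ 0 := by
      have : (1 : ℝ) ≤ m := by exact_mod_cast hj1.trans hjm
      linarith
    refine ⟨m + 1 - j, ⟨by omega, by omega⟩, ?_⟩
    simp only [Nat.cast_sub (show j ≤ m + 1 by omega)]
    push_cast
    field_simp
    ring

lemma left_mem_rightGrid (hm : 1 ≤ m) : u ∈ rightGrid u v m :=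
  ⟨1, ⟨le_rfl, hm⟩, by simp⟩

lemma right_notMem_rightGrid (huv : u < v) : v ∉ rightGrid u v m := fun hv =>
  left_notMem_leftGrid (neg_lt_neg huv) (neg_rightGrid ▸ neg_mem_neg.mpr hv)

end grids

section convexity

variable {t s p r : ℝ}

lemma pow_three_div_sq_add_sub_eq (hp : p ≠ 0) (hr : r ≠ 0) (hpr : p + r ≠ 0) :
    t ^ 3 / p ^ 2 + s ^ 3 / r ^ 2 - (t + s) ^ 3 / (p + r) ^ 2
      = (t * r - s * p) ^ 2 * (2 * (t + s) * p * r + p ^ 2 * s + r ^ 2 * t)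
        / (p ^ 2 * r ^ 2 * (p + r) ^ 2) := by
  field_simp
  ring

lemma add_pow_three_div_sq_le (ht : 0 ≤ t) (hs : 0 ≤ s) (hp : 0 < p) (hr : 0 < r) :
    (t + s) ^ 3 / (p + r) ^ 2 ≤ t ^ 3 / p ^ 2 + s ^ 3 / r ^ 2 := by
  have h := pow_three_div_sq_add_sub_eq (t := t) (s := s) hp.ne' hr.ne' (by positivity)
  have : 0 ≤ (t * r - s * p) ^ 2 * (2 * (t + s) * p * r + p ^ 2 * s + r ^ 2 * t)
      / (p ^ 2 * r ^ 2 * (p + r) ^ 2) := by positivity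
  linarith

lemma mul_eq_mul_of_add_pow_three_div_sq_eq (ht : 0 ≤ t) (hs : 0 ≤ s) (hp : 0 < p) (hr : 0 < r)
    (h : (t + s) ^ 3 / (p + r) ^ 2 = t ^ 3 / p ^ 2 + s ^ 3 / r ^ 2) : t * r = s * p := by
  by_contra hne
  have hts : 0 < t + s := by
    by_contra! h0
    exact hne (by rw [show t = 0 by linarith, show s = 0 by linarith]; ring)
  have hpos : 0 < (t * r - s * p) ^ 2 * (2 * (t + s) * p * r + p ^ 2 * s + r ^ 2 * t)
      / (p ^ 2 * r ^ 2 * (p + r) ^ 2) := by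
    have : (t * r - s * p) ^ 2 ≠ 0 := pow_ne_zero 2 (sub_ne_zero.2 hne)
    positivity
  have := pow_three_div_sq_add_sub_eq (t := t) (s := s) hp.ne' hr.ne' (by positivity)
  linarith

lemma pow_three_div_le_add_of_le {I : ℝ} (ht : 0 ≤ t) (hs : 0 ≤ s) (hp : 0 < p) (hr : 0 < r)
    (hI : s ^ 3 / (12 * r ^ 2) ≤ I) :
    (t + s) ^ 3 / (12 * (p + r) ^ 2) ≤ t ^ 3 / (12 * p ^ 2) + I ∧
      (t ^ 3 / (12 * p ^ 2) + I = (t + s) ^ 3 / (12 * (p + r) ^ 2) →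
        I = s ^ 3 / (12 * r ^ 2) ∧ t * r = s * p) := by
  have h12 : ∀ z w : ℝ, z ^ 3 / (12 * w ^ 2) = z ^ 3 / w ^ 2 / 12 := fun z w => by
    rw [div_div, mul_comm]
  simp only [h12] at hI ⊢
  have hconv := add_pow_three_div_sq_le ht hs hp hr
  refine ⟨by linarith, fun h => ⟨by linarith, ?_⟩⟩
  exact mul_eq_mul_of_add_pow_three_div_sq_eq ht hs hp hr (by linarith)

end convexity

section lowerBounds

variable {Q : Set ℝ} {u v : ℝ}

lemma exists_mem_subset_Icc_lt (hQ : Q.Finite) (hQv : Q ⊆ Iic v) (hv : v ∈ Q)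
    (h2 : 2 ≤ Q.ncard) : ∃ q ∈ Q, Q ⊆ Icc q v ∧ q < v := by
  have hmem : sInf Q ∈ Q := Nonempty.csInf_mem ⟨v, hv⟩ hQ
  refine ⟨sInf Q, hmem, fun p hp => ⟨csInf_le hQ.bddBelow hp, hQv hp⟩,
    (hQv hmem).lt_of_ne fun heq => ?_⟩
  have hsub : Q ⊆ {v} := fun p hp => le_antisymm (hQv hp) (heq ▸ csInf_le hQ.bddBelow hp)
  have := ncard_le_ncard hsub (finite_singleton v)
  rw [ncard_singleton] at this
  omega

lemma integral_sqInfDist_singleton (u v : ℝ) :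
    ∫ x in u..v, sqInfDist {v} x = (v - u) ^ 3 / 3 := by
  simp only [sqInfDist_singleton]
  rw [integral_sub_sq]
  ring

theorem le_integral_sqInfDist_of_mem_ends {N : ℕ} (hN : 2 ≤ N) :
    ∀ {Q : Set ℝ} {u v : ℝ}, u < v → Q.Finite → Q ⊆ Icc u v → u ∈ Q → v ∈ Q →
      Q.ncard = N →
      (v - u) ^ 3 / (12 * ((N : ℝ) - 1) ^ 2) ≤ ∫ x in u..v, sqInfDist Q x ∧
      (∫ x in u..v, sqInfDist Q x = (v - u) ^ 3 / (12 * ((N : ℝ) - 1) ^ 2) →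
        Q = midGrid u v N) := by
  induction N, hN using Nat.le_induction with
  | base =>
    intro Q u v huv hQ _ hu hv hcard
    obtain rfl : Q = {u, v} := (eq_of_subset_of_ncard_le
      (insert_subset hu (singleton_subset_iff.2 hv)) (by rw [hcard, ncard_pair huv.ne]) hQ).symm
    rw [integral_sqInfDist_pair huv.le, midGrid_two]
    norm_num
  | succ N hN ih =>
    intro Q u v huv hQ hQuv hu hv hcard
    set Q' := Q \ {u} with hQ'
    have hQ'fin : Q'.Finite := hQ.sdiff
    have hQins : Q = insert u Q' := by rw [hQ', insert_sdiff_singleton, insert_eq_of_mem hu]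
    have hv' : v ∈ Q' := ⟨hv, huv.ne'⟩
    have hQ'card : Q'.ncard = N := by
      rw [hQ', ncard_sdiff_singleton_of_mem hu, hcard, Nat.add_sub_cancel]
    obtain ⟨q, hq, hQ'q, hqv⟩ :=
      exists_mem_subset_Icc_lt hQ'fin (fun p hp => (hQuv hp.1).2) hv' (by omega)
    have huq : u < q := (hQuv hq.1).1.lt_of_ne (Ne.symm hq.2)
    obtain ⟨hle, heq⟩ := ih hqv hQ'fin hQ'q hq hv' hQ'card
    have hr : (0 : ℝ) < N - 1 := by
      have : (2 : ℝ) ≤ N := by exact_mod_cast hN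
      linarith
    obtain ⟨hglue, hglue_eq⟩ :=
      pow_three_div_le_add_of_le (sub_nonneg.2 huq.le) (sub_nonneg.2 hqv.le) one_pos hr hle
    have hbound : (v - u) ^ 3 / (12 * (((N + 1 : ℕ) : ℝ) - 1) ^ 2)
        = ((q - u) + (v - q)) ^ 3 / (12 * (1 + ((N : ℝ) - 1)) ^ 2) := by
      push_cast
      ring
    rw [hQins, integral_sqInfDist_insert hQ'fin hq (fun p hp => (hQ'q hp).1) huq.le hqv.le,
      hbound, show (q - u) ^ 3 / 12 = (q - u) ^ 3 / (12 * 1 ^ 2) by ring]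
    refine ⟨hglue, fun hI => ?_⟩
    obtain ⟨hI', hqu⟩ := hglue_eq hI
    have hq' : q = u + (v - u) / N := by
      field_simp
      linarith
    rw [heq hI', hq', insert_midGrid hN]

/-- A free end cell of length `t` costs `t³ / 3 = (2t)³ / 12`, as much as half an inner cell of
length `2t`; this is why the optimal grid starts half a step away from `u`. -/
theorem le_integral_sqInfDist_of_right_mem {k : ℕ} (hk : 1 ≤ k) (hQ : Q.Finite)
    (hQuv : Q ⊆ Icc u v) (hv : v ∈ Q) (hcard : Q.ncard = k) :
    (v - u) ^ 3 / (3 * (2 * (k : ℝ) - 1) ^ 2) ≤ ∫ x in u..v, sqInfDist Q x ∧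
      (∫ x in u..v, sqInfDist Q x = (v - u) ^ 3 / (3 * (2 * (k : ℝ) - 1) ^ 2) →
        Q = leftGrid u v k) := by
  obtain rfl | hk2 := hk.eq_or_lt
  · obtain ⟨w, rfl⟩ := ncard_eq_one.1 hcard
    obtain rfl := mem_singleton_iff.1 hv
    rw [integral_sqInfDist_singleton, leftGrid_one]
    norm_num
  obtain ⟨q, hq, hQq, hqv⟩ :=
    exists_mem_subset_Icc_lt hQ (fun p hp => (hQuv hp).2) hv (hcard ▸ hk2)
  have huq : u ≤ q := (hQuv hq).1
  obtain ⟨hle, heq⟩ := le_integral_sqInfDist_of_mem_ends hk2 hqv hQ hQq hq hv hcard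
  have hk : (2 : ℝ) ≤ k := by exact_mod_cast hk2
  have hr : (0 : ℝ) < k - 1 := by linarith
  obtain ⟨hglue, hglue_eq⟩ :=
    pow_three_div_le_add_of_le (sub_nonneg.2 huq) (sub_nonneg.2 hqv.le) one_half_pos hr hle
  have hbound : (v - u) ^ 3 / (3 * (2 * (k : ℝ) - 1) ^ 2)
      = ((q - u) + (v - q)) ^ 3 / (12 * (1 / 2 + ((k : ℝ) - 1)) ^ 2) := by
    rw [show (1 / 2 : ℝ) + (k - 1) = (2 * k - 1) / 2 by ring]
    ring
  rw [integral_sqInfDist_of_le_min hQ hq (fun p hp => (hQq hp).1) huq v, hbound,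
    show (q - u) ^ 3 / 3 = (q - u) ^ 3 / (12 * (1 / 2) ^ 2) by ring]
  refine ⟨hglue, fun hI => ?_⟩
  obtain ⟨hI', hqu⟩ := hglue_eq hI
  have hq' : q = u + (v - u) / (2 * k - 1) := by
    have : 2 * (k : ℝ) - 1 ≠ 0 := by linarith
    field_simp
    linarith
  rw [heq hI', leftGrid_eq_midGrid hk2, hq']

theorem le_integral_sqInfDist_of_left_mem {m : ℕ} (hm : 1 ≤ m) (hQ : Q.Finite)
    (hQuv : Q ⊆ Icc u v) (hu : u ∈ Q) (hcard : Q.ncard = m) :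
    (v - u) ^ 3 / (3 * (2 * (m : ℝ) - 1) ^ 2) ≤ ∫ x in u..v, sqInfDist Q x ∧
      (∫ x in u..v, sqInfDist Q x = (v - u) ^ 3 / (3 * (2 * (m : ℝ) - 1) ^ 2) →
        Q = rightGrid u v m) := by
  have hQuv' : -Q ⊆ Icc (-v) (-u) := fun x hx => by
    have := hQuv (Set.mem_neg.1 hx)
    constructor <;> linarith [this.1, this.2]
  have h := le_integral_sqInfDist_of_right_mem hm hQ.neg hQuv'
    (neg_mem_neg.2 hu) (by rw [ncard_neg, hcard])
  rw [← integral_sqInfDist_neg, neg_sub_neg] at h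
  refine ⟨h.1, fun hI => ?_⟩
  rw [← neg_neg Q, h.2 hI, ← neg_rightGrid, neg_neg]

end lowerBounds

section exactValues

variable {u v : ℝ}

theorem integral_sqInfDist_midGrid {N : ℕ} (hN : 2 ≤ N) :
    ∀ {u v : ℝ}, u < v →
      ∫ x in u..v, sqInfDist (midGrid u v N) x = (v - u) ^ 3 / (12 * ((N : ℝ) - 1) ^ 2) := by
  induction N, hN using Nat.le_induction with
  | base =>
    intro u v huv
    rw [midGrid_two, integral_sqInfDist_pair huv.le]
    norm_num
  | succ N hN ih =>
    intro u v huv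
    have hN' : (2 : ℝ) ≤ N := by exact_mod_cast hN
    have hstep : 0 < (v - u) / N := div_pos (by linarith) (by linarith)
    have hqv : u + (v - u) / N < v := by
      have : (v - u) / N < v - u := div_lt_self (by linarith) (by linarith)
      linarith
    rw [← insert_midGrid hN, integral_sqInfDist_insert (midGrid_finite _ _ _)
      (left_mem_midGrid (by omega)) ((midGrid_subset_Icc hqv.le).trans Icc_subset_Ici_self)
      (by linarith) hqv.le, ih hqv]
    have : (N : ℝ) ≠ 0 := by linarith
    have : (N : ℝ) - 1 ≠ 0 := by linarith
    push_cast
    rw [add_sub_cancel_right]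
    field_simp
    ring

theorem integral_sqInfDist_leftGrid {k : ℕ} (hk : 1 ≤ k) (huv : u < v) :
    ∫ x in u..v, sqInfDist (leftGrid u v k) x = (v - u) ^ 3 / (3 * (2 * (k : ℝ) - 1) ^ 2) := by
  obtain rfl | hk2 := hk.eq_or_lt
  · rw [leftGrid_one, integral_sqInfDist_singleton]
    norm_num
  have hk' : (2 : ℝ) ≤ k := by exact_mod_cast hk2
  have hstep : 0 < (v - u) / (2 * k - 1) := div_pos (by linarith) (by linarith)
  have hqv : u + (v - u) / (2 * k - 1) < v := by
    have : (v - u) / (2 * k - 1) < v - u := div_lt_self (by linarith) (by linarith)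
    linarith
  rw [leftGrid_eq_midGrid hk2, integral_sqInfDist_of_le_min (midGrid_finite _ _ _)
    (left_mem_midGrid hk) ((midGrid_subset_Icc hqv.le).trans Icc_subset_Ici_self)
    (by linarith) v, integral_sqInfDist_midGrid hk2 hqv]
  have : (k : ℝ) - 1 ≠ 0 := by linarith
  have : 2 * (k : ℝ) - 1 ≠ 0 := by linarith
  field_simp
  ring

theorem integral_sqInfDist_rightGrid {m : ℕ} (hm : 1 ≤ m) (huv : u < v) :
    ∫ x in u..v, sqInfDist (rightGrid u v m) x = (v - u) ^ 3 / (3 * (2 * (m : ℝ) - 1) ^ 2) := by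
  rw [integral_sqInfDist_neg, neg_rightGrid, integral_sqInfDist_leftGrid hm (neg_lt_neg huv),
    neg_sub_neg]

end exactValues

def clampImage (u v : ℝ) (F : Set ℝ) : Set ℝ :=
  (fun p => max u (min p v)) '' F

section clampImage

variable {F : Set ℝ} {p u v x : ℝ}

lemma clampImage_finite (hF : F.Finite) : (clampImage u v F).Finite := hF.image _

lemma clampImage_subset_Icc (huv : u ≤ v) : clampImage u v F ⊆ Icc u v := by
  rintro _ ⟨p, -, rfl⟩
  exact ⟨le_max_left _ _, max_le huv (min_le_right _ _)⟩

lemma mem_clampImage (hp : p ∈ F) (hpuv : p ∈ Icc u v) : p ∈ clampImage u v F :=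
  ⟨p, hp, by dsimp only; rw [min_eq_left hpuv.2, max_eq_right hpuv.1]⟩

lemma sqInfDist_clampImage_le (hF : F.Nonempty) (hx : x ∈ Icc u v) :
    sqInfDist (clampImage u v F) x ≤ sqInfDist F x := by
  refine le_sqInfDist hF fun p hp =>
    (sqInfDist_le (Q := clampImage u v F) (mem_image_of_mem _ hp) x).trans ?_
  show (x - max u (min p v)) ^ 2 ≤ (x - p) ^ 2
  obtain ⟨hux, hxv⟩ := hx
  rcases le_total p v with hpv | hvp
  · rw [min_eq_left hpv]
    rcases le_total u p with hup | hpu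
    · rw [max_eq_right hup]
    · rw [max_eq_left hpu]
      nlinarith
  · rw [min_eq_right hvp, max_eq_right (hux.trans hxv)]
    nlinarith

lemma clampImage_inter_Iic (hv : v ∈ F) :
    clampImage u v (F ∩ Iic v) = clampImage u v F := by
  refine (image_mono inter_subset_left).antisymm ?_
  rintro _ ⟨p, hp, rfl⟩
  rcases le_total p v with hpv | hvp
  · exact ⟨p, ⟨hp, hpv⟩, rfl⟩
  · exact ⟨v, ⟨hv, mem_Iic.2 le_rfl⟩, by dsimp only; rw [min_eq_right hvp, min_self]⟩

lemma clampImage_inter_Ici (hu : u ∈ F) :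
    clampImage u v (F ∩ Ici u) = clampImage u v F := by
  refine (image_mono inter_subset_left).antisymm ?_
  rintro _ ⟨p, hp, rfl⟩
  rcases le_total u p with hup | hpu
  · exact ⟨p, ⟨hp, hup⟩, rfl⟩
  · exact ⟨u, ⟨hu, mem_Ici.2 le_rfl⟩, by
      dsimp only
      rw [max_eq_left (min_le_left u v), max_eq_left ((min_le_left p v).trans hpu)]⟩

lemma clampImage_eq_self (h : F ⊆ Icc u v) : clampImage u v F = F := by
  conv_rhs => rw [← image_id F]
  exact image_congr fun p hp => by rw [min_eq_left (h hp).2, max_eq_right (h hp).1]; rfl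

lemma clampImage_eq_inter (hu : u ∈ F) (hv : v ∈ F) (huv : u ≤ v) :
    clampImage u v F = F ∩ Icc u v := by
  rw [← clampImage_inter_Iic hv, ← clampImage_inter_Ici (mem_inter hu (mem_Iic.2 huv)),
    clampImage_eq_self fun p hp => ⟨hp.2, hp.1.2⟩, inter_assoc, Iic_inter_Ici]

lemma clampImage_eq_inter_of_left_notMem (hu : u ∉ clampImage u v F) (hv : v ∈ F)
    (huv : u ≤ v) : clampImage u v F = F ∩ Icc u v := by
  have hF : ∀ p ∈ F, u ≤ p := fun p hp => not_lt.1 fun hpu =>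
    hu ⟨p, hp, by dsimp only; rw [min_eq_left (hpu.le.trans huv), max_eq_left hpu.le]⟩
  rw [← clampImage_inter_Iic hv, clampImage_eq_self fun p hp => ⟨hF p hp.1, hp.2⟩]
  ext p
  exact ⟨fun hp => ⟨hp.1, hF p hp.1, hp.2⟩, fun hp => ⟨hp.1, hp.2.2⟩⟩

lemma clampImage_eq_inter_of_right_notMem (hv : v ∉ clampImage u v F) (hu : u ∈ F)
    (huv : u ≤ v) : clampImage u v F = F ∩ Icc u v := by
  have hF : ∀ p ∈ F, p ≤ v := fun p hp => not_lt.1 fun hvp =>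
    hv ⟨p, hp, by dsimp only; rw [min_eq_right hvp.le, max_eq_right huv]⟩
  rw [← clampImage_inter_Ici hu, clampImage_eq_self fun p hp => ⟨hp.2, hF p hp.1⟩]
  ext p
  exact ⟨fun hp => ⟨hp.1, hp.2, hF p hp.1⟩, fun hp => ⟨hp.1, hp.2.1⟩⟩

lemma integral_sqInfDist_clampImage_le (hF : F.Finite) (hne : F.Nonempty) (huv : u ≤ v) :
    ∫ x in u..v, sqInfDist (clampImage u v F) x ≤ ∫ x in u..v, sqInfDist F x :=
  intervalIntegral.integral_mono_on huv
    ((continuous_sqInfDist (clampImage_finite hF) (hne.image _)).intervalIntegrable u v)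
    ((continuous_sqInfDist hF hne).intervalIntegrable u v)
    fun _ hx => sqInfDist_clampImage_le hne hx

lemma ncard_inter_Iic_add_ncard_inter_Icc_add_ncard_inter_Ici {c d : ℝ} (hF : F.Finite)
    (hc : c ∈ F) (hd : d ∈ F) (hcd : c ≤ d) :
    (F ∩ Iic c).ncard + (F ∩ Icc c d).ncard + (F ∩ Ici d).ncard = F.ncard + 2 := by
  have h1 := ncard_union_add_ncard_inter (F ∩ Iic c) (F ∩ Icc c d) (hF.inter_of_left _)
    (hF.inter_of_left _)
  have h2 := ncard_union_add_ncard_inter (F ∩ Iic d) (F ∩ Ici d) (hF.inter_of_left _)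
    (hF.inter_of_left _)
  rw [← inter_union_distrib_left, Iic_union_Icc_eq_Iic hcd] at h1
  rw [← inter_union_distrib_left, Iic_union_Ici, inter_univ] at h2
  have hc' : F ∩ Iic c ∩ (F ∩ Icc c d) = {c} := by
    ext p
    simp only [mem_inter_iff, mem_Iic, mem_Icc, mem_singleton_iff]
    constructor
    · rintro ⟨⟨-, hpc⟩, -, hcp, -⟩
      exact le_antisymm hpc hcp
    · rintro rfl
      exact ⟨⟨hc, le_rfl⟩, hc, le_rfl, hcd⟩
  have hd' : F ∩ Iic d ∩ (F ∩ Ici d) = {d} := by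
    ext p
    simp only [mem_inter_iff, mem_Iic, mem_Ici, mem_singleton_iff]
    constructor
    · rintro ⟨⟨-, hpd⟩, -, hdp⟩
      exact le_antisymm hpd hdp
    · rintro rfl
      exact ⟨⟨hd, le_rfl⟩, hd, le_rfl⟩
  rw [hc', ncard_singleton] at h1
  rw [hd', ncard_singleton] at h2
  omega

lemma ncard_clampImage_add_le {a b c d : ℝ} (hcd : c ≤ d) (hF : F.Finite) (hc : c ∈ F)
    (hd : d ∈ F) :
    (clampImage a c F).ncard + (clampImage c d F).ncard + (clampImage d b F).ncard
      ≤ F.ncard + 2 := by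
  rw [← clampImage_inter_Iic hc, ← clampImage_inter_Ici hd, clampImage_eq_inter hc hd hcd,
    ← ncard_inter_Iic_add_ncard_inter_Icc_add_ncard_inter_Ici hF hc hd hcd]
  have hleft : (clampImage a c (F ∩ Iic c)).ncard ≤ (F ∩ Iic c).ncard :=
    ncard_image_le (hF.inter_of_left _)
  have hright : (clampImage d b (F ∩ Ici d)).ncard ≤ (F ∩ Ici d).ncard :=
    ncard_image_le (hF.inter_of_left _)
  omega

end clampImage

lemma distortion_uniformOn {a b : ℝ} (hab : a < b) (S : Set ℝ) :
    distortion (uniformOn a b) S = (b - a)⁻¹ * ∫ x in a..b, sqInfDist S x := by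
  rw [distortion, uniformOn, integral_smul_measure, ENNReal.toReal_inv,
    ENNReal.toReal_ofReal (by linarith), smul_eq_mul, intervalIntegral.integral_of_le hab.le,
    integral_Icc_eq_integral_Ioc]
  rfl

lemma condQuantError_le_distortion (P : Measure ℝ) (β : Set ℝ) (n : ℕ) {α : Set ℝ}
    (hα : α.Finite) (hcard : α.ncard ≤ n - β.ncard) :
    condQuantError P β n ≤ distortion P (α ∪ β) :=
  csInf_le ⟨0, by
    rintro _ ⟨α, -, -, rfl⟩
    exact integral_nonneg fun x => sqInfDist_nonneg _ x⟩ ⟨α, hα, hcard, rfl⟩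

lemma integral_sqInfDist_split {S : Set ℝ} (hS : S.Finite) (hne : S.Nonempty) (a c d b : ℝ) :
    ∫ x in a..b, sqInfDist S x
      = (∫ x in a..c, sqInfDist S x) + (∫ x in c..d, sqInfDist S x)
        + ∫ x in d..b, sqInfDist S x := by
  have hf := continuous_sqInfDist hS hne
  rw [intervalIntegral.integral_add_adjacent_intervals (hf.intervalIntegrable a c)
    (hf.intervalIntegrable c d), intervalIntegral.integral_add_adjacent_intervals
    (hf.intervalIntegrable a d) (hf.intervalIntegrable d b)]

lemma integral_sqInfDist_anti {Q Q' : Set ℝ} {u v : ℝ} (hQ : Q.Finite) (hQ' : Q'.Finite)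
    (hne : Q.Nonempty) (h : Q ⊆ Q') (huv : u ≤ v) :
    ∫ x in u..v, sqInfDist Q' x ≤ ∫ x in u..v, sqInfDist Q x :=
  intervalIntegral.integral_mono_on huv
    ((continuous_sqInfDist hQ' (hne.mono h)).intervalIntegrable u v)
    ((continuous_sqInfDist hQ hne).intervalIntegrable u v) fun x _ => sqInfDist_anti h hne x

/-- `(b - a)⁻¹ * gridError a c d b k l m` is the error of the union of the optimal grids with
`k`, `l`, `m` points on `[a, c]`, `[c, d]`, `[d, b]`. -/
noncomputable def gridError (a c d b : ℝ) (k l m : ℕ) : ℝ :=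
  (c - a) ^ 3 / (3 * (2 * (k : ℝ) - 1) ^ 2) + (d - c) ^ 3 / (12 * ((l : ℝ) - 1) ^ 2)
    + (b - d) ^ 3 / (3 * (2 * (m : ℝ) - 1) ^ 2)

lemma gridError_succ_lt {a c d b : ℝ} (hac : a < c) {k : ℕ} (hk : 1 ≤ k) (l m : ℕ) :
    gridError a c d b (k + 1) l m < gridError a c d b k l m := by
  have hk : (1 : ℝ) ≤ k := by exact_mod_cast hk
  have : (c - a) ^ 3 / (3 * (2 * ((k + 1 : ℕ) : ℝ) - 1) ^ 2)
      < (c - a) ^ 3 / (3 * (2 * (k : ℝ) - 1) ^ 2) := by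
    push_cast
    apply div_lt_div_of_pos_left (pow_pos (sub_pos.2 hac) 3) (by nlinarith)
    nlinarith
  unfold gridError
  linarith

section configuration

variable {a b c d : ℝ}

theorem condQuantError_le_gridError (hac : a < c) (hcd : c < d) (hdb : d < b) {n K L M : ℕ}
    (hK : 1 ≤ K) (hL : 2 ≤ L) (hM : 1 ≤ M) (hsum : K + L + M ≤ n + 2) :
    condQuantError (uniformOn a b) {c, d} n ≤ (b - a)⁻¹ * gridError a c d b K L M := by
  set lG := leftGrid a c K
  set mG := midGrid c d L
  set rG := rightGrid d b M
  set G := lG ∪ mG ∪ rG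
  have hlG : lG.Finite := leftGrid_finite a c K
  have hmG : mG.Finite := midGrid_finite c d L
  have hrG : rG.Finite := rightGrid_finite d b M
  have hG : G.Finite := (hlG.union hmG).union hrG
  have hc : c ∈ lG ∩ mG := ⟨right_mem_leftGrid hK, left_mem_midGrid (by omega)⟩
  have hd : d ∈ (lG ∪ mG) ∩ rG := ⟨Or.inr (right_mem_midGrid hL), left_mem_rightGrid hM⟩
  have hcdG : {c, d} ⊆ G :=
    insert_subset (Or.inl (Or.inl hc.1)) (singleton_subset_iff.2 (Or.inr hd.2))
  have hcard : G.ncard + 2 ≤ K + L + M := by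
    have h1 := ncard_union_add_ncard_inter lG mG hlG hmG
    have h2 : G.ncard + ((lG ∪ mG) ∩ rG).ncard = (lG ∪ mG).ncard + rG.ncard :=
      ncard_union_add_ncard_inter _ _ (hlG.union hmG) hrG
    have := (ncard_pos (hlG.inter_of_left mG)).2 ⟨c, hc⟩
    have := (ncard_pos ((hlG.union hmG).inter_of_left rG)).2 ⟨d, hd⟩
    have : lG.ncard ≤ K := ncard_image_Icc_one_le _ K
    have : mG.ncard ≤ L := ncard_image_Icc_one_le _ L
    have : rG.ncard ≤ M := ncard_image_Icc_one_le _ M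
    omega
  calc condQuantError (uniformOn a b) {c, d} n
      ≤ distortion (uniformOn a b) (G \ {c, d} ∪ {c, d}) :=
        condQuantError_le_distortion _ _ _ hG.sdiff (by
          rw [ncard_sdiff hcdG, ncard_pair hcd.ne]
          omega)
    _ = (b - a)⁻¹ * ((∫ x in a..c, sqInfDist G x) + (∫ x in c..d, sqInfDist G x)
          + ∫ x in d..b, sqInfDist G x) := by
        rw [sdiff_union_of_subset hcdG, distortion_uniformOn (hac.trans (hcd.trans hdb)),
          integral_sqInfDist_split hG ⟨c, hcdG (mem_insert c _)⟩]
    _ ≤ (b - a)⁻¹ * gridError a c d b K L M := by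
        have hab : 0 < b - a := by linarith
        gcongr
        rw [gridError, ← integral_sqInfDist_leftGrid hK hac,
          ← integral_sqInfDist_midGrid hL hcd, ← integral_sqInfDist_rightGrid hM hdb]
        gcongr ?_ + ?_ + ?_
        · exact integral_sqInfDist_anti hlG hG ⟨c, hc.1⟩
            (subset_union_left.trans subset_union_left) hac.le
        · exact integral_sqInfDist_anti hmG hG ⟨c, hc.2⟩
            (subset_union_right.trans subset_union_left) hcd.le
        · exact integral_sqInfDist_anti hrG hG ⟨d, hd.2⟩ subset_union_right hdb.le

end configuration

lemma inv_mul_gridError (a b c d : ℝ) (k l m : ℕ) :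
    (b - a)⁻¹ * gridError a c d b k l m
      = 1 / (3 * (b - a)) * ((c - a) ^ 3 / (2 * (k : ℝ) - 1) ^ 2
          + 1 / 4 * (d - c) ^ 3 / ((l : ℝ) - 1) ^ 2 + (b - d) ^ 3 / (2 * (m : ℝ) - 1) ^ 2) := by
  simp only [gridError, div_mul_eq_div_div_swap]
  ring

section optimal

variable {a b c d : ℝ} {n k l m : ℕ} {F : Set ℝ}

theorem add_eq_of_condQuantError_eq (hac : a < c) (hcd : c < d) (hdb : d < b) (hk : 1 ≤ k)
    (hl : 2 ≤ l) (hm : 1 ≤ m) (hsum : k + l + m ≤ n + 2)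
    (hV : condQuantError (uniformOn a b) {c, d} n = (b - a)⁻¹ * gridError a c d b k l m) :
    k + l + m = n + 2 := by
  refine hsum.antisymm (not_lt.1 fun hlt => ?_)
  have hle := condQuantError_le_gridError hac hcd hdb (Nat.le_succ_of_le hk) hl hm
    (show k + 1 + l + m ≤ n + 2 by omega)
  have hlt := mul_lt_mul_of_pos_left (gridError_succ_lt (d := d) (b := b) hac hk l m)
    (inv_pos.2 (sub_pos.2 (hac.trans (hcd.trans hdb))))
  linarith

theorem clampImages_eq_grids_of_ncard_le (hac : a < c) (hcd : c < d) (hdb : d < b)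
    (hF : F.Finite) (hc : c ∈ F) (hd : d ∈ F) (hk : (clampImage a c F).ncard = k)
    (hl : (clampImage c d F).ncard = l) (hm : (clampImage d b F).ncard = m)
    (hk1 : 1 ≤ k) (hl2 : 2 ≤ l) (hm1 : 1 ≤ m) (hsum : k + l + m ≤ n + 2)
    (hopt : distortion (uniformOn a b) F = condQuantError (uniformOn a b) {c, d} n) :
    clampImage a c F = leftGrid a c k ∧ clampImage c d F = midGrid c d l
      ∧ clampImage d b F = rightGrid d b m
      ∧ condQuantError (uniformOn a b) {c, d} n = (b - a)⁻¹ * gridError a c d b k l m := by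
  have hab : a < b := hac.trans (hcd.trans hdb)
  have hne : F.Nonempty := ⟨c, hc⟩
  obtain ⟨lb₁, eq₁⟩ := le_integral_sqInfDist_of_right_mem hk1 (clampImage_finite hF)
    (clampImage_subset_Icc hac.le) (mem_clampImage hc ⟨hac.le, le_rfl⟩) hk
  obtain ⟨lb₂, eq₂⟩ := le_integral_sqInfDist_of_mem_ends hl2 hcd (clampImage_finite hF)
    (clampImage_subset_Icc hcd.le) (mem_clampImage hc ⟨le_rfl, hcd.le⟩)
    (mem_clampImage hd ⟨hcd.le, le_rfl⟩) hl
  obtain ⟨lb₃, eq₃⟩ := le_integral_sqInfDist_of_left_mem hm1 (clampImage_finite hF)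
    (clampImage_subset_Icc hdb.le) (mem_clampImage hd ⟨le_rfl, hdb.le⟩) hm
  have le₁ := integral_sqInfDist_clampImage_le hF hne hac.le
  have le₂ := integral_sqInfDist_clampImage_le hF hne hcd.le
  have le₃ := integral_sqInfDist_clampImage_le hF hne hdb.le
  have hV : condQuantError (uniformOn a b) {c, d} n = (b - a)⁻¹ * ((∫ x in a..c, sqInfDist F x)
      + (∫ x in c..d, sqInfDist F x) + ∫ x in d..b, sqInfDist F x) := by
    rw [← hopt, distortion_uniformOn hab, integral_sqInfDist_split hF hne a c d b]
  have hup := condQuantError_le_gridError hac hcd hdb hk1 hl2 hm1 hsum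
  rw [hV] at hup
  have hup := le_of_mul_le_mul_left hup (inv_pos.2 (sub_pos.2 hab))
  rw [gridError] at hup
  refine ⟨eq₁ (by linarith), eq₂ (by linarith), eq₃ (by linarith), ?_⟩
  rw [hV, gridError]
  congr 1
  linarith

theorem clampImages_eq_grids_of_optimal (hac : a < c) (hcd : c < d) (hdb : d < b)
    (hF : F.Finite) (hc : c ∈ F) (hd : d ∈ F) (hFn : F.ncard ≤ n)
    (hk : (clampImage a c F).ncard = k)
    (hl : (clampImage c d F).ncard = l) (hm : (clampImage d b F).ncard = m)
    (hopt : distortion (uniformOn a b) F = condQuantError (uniformOn a b) {c, d} n) :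
    k + l + m = n + 2 ∧ clampImage a c F = leftGrid a c k ∧ clampImage c d F = midGrid c d l
      ∧ clampImage d b F = rightGrid d b m
      ∧ condQuantError (uniformOn a b) {c, d} n = (b - a)⁻¹ * gridError a c d b k l m := by
  have hk1 : 1 ≤ k :=
    hk ▸ (ncard_pos (clampImage_finite hF)).2 ⟨c, mem_clampImage hc ⟨hac.le, le_rfl⟩⟩
  have hl2 : 2 ≤ l := hl ▸ ncard_pair hcd.ne ▸ ncard_le_ncard
    (insert_subset (mem_clampImage hc ⟨le_rfl, hcd.le⟩)
      (singleton_subset_iff.2 (mem_clampImage hd ⟨hcd.le, le_rfl⟩))) (clampImage_finite hF)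
  have hm1 : 1 ≤ m :=
    hm ▸ (ncard_pos (clampImage_finite hF)).2 ⟨d, mem_clampImage hd ⟨le_rfl, hdb.le⟩⟩
  have hsum : k + l + m ≤ n + 2 := by
    have := ncard_clampImage_add_le (a := a) (b := b) hcd.le hF hc hd
    omega
  obtain ⟨h₁, h₂, h₃, hV⟩ :=
    clampImages_eq_grids_of_ncard_le hac hcd hdb hF hc hd hk hl hm hk1 hl2 hm1 hsum hopt
  exact ⟨add_eq_of_condQuantError_eq hac hcd hdb hk1 hl2 hm1 hsum hV, h₁, h₂, h₃, hV⟩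

end optimal

theorem stmt0 (a b c d : ℝ) (hac : a < c) (hcd : c < d) (hdb : d < b)
    (n k l m : ℕ) (hn : 2 ≤ n)
    (α : Set ℝ) (hαf : α.Finite) (hαcard : α.ncard ≤ n - 2)
    (hopt : distortion (uniformOn a b) (α ∪ {c, d}) = condQuantError (uniformOn a b) {c, d} n)
    (hkc : ((α ∪ {c, d}) ∩ Set.Icc a c).ncard = k)
    (hlc : ((α ∪ {c, d}) ∩ Set.Icc c d).ncard = l)
    (hmc : ((α ∪ {c, d}) ∩ Set.Icc d b).ncard = m) :
    k + l + m = n + 2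
    ∧ (α ∪ {c, d}) ∩ Set.Icc a c
        = (fun j : ℕ => a + (2 * (j : ℝ) - 1) * (c - a) / (2 * (k : ℝ) - 1)) '' Set.Icc 1 k
    ∧ (α ∪ {c, d}) ∩ Set.Icc c d
        = (fun j : ℕ => c + (((j : ℝ) - 1) / ((l : ℝ) - 1)) * (d - c)) '' Set.Icc 1 l
    ∧ (α ∪ {c, d}) ∩ Set.Icc d b
        = (fun j : ℕ => d + 2 * ((j : ℝ) - 1) * (b - d) / (2 * (m : ℝ) - 1)) '' Set.Icc 1 m
    ∧ condQuantError (uniformOn a b) {c, d} n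
        = 1 / (3 * (b - a)) * ((c - a) ^ 3 / (2 * (k : ℝ) - 1) ^ 2
            + 1 / 4 * (d - c) ^ 3 / ((l : ℝ) - 1) ^ 2
            + (b - d) ^ 3 / (2 * (m : ℝ) - 1) ^ 2) := by
  set F := α ∪ {c, d}
  have hc : c ∈ F := Or.inr (mem_insert c _)
  have hd : d ∈ F := Or.inr (mem_insert_of_mem c rfl)
  have hFn : F.ncard ≤ n := (ncard_union_le α {c, d}).trans (by rw [ncard_pair hcd.ne]; omega)
  obtain ⟨hsum, h₁, h₂, h₃, hV⟩ :=
    clampImages_eq_grids_of_optimal hac hcd hdb (hαf.union (toFinite _)) hc hd hFn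
      rfl rfl rfl hopt
  have e₁ := clampImage_eq_inter_of_left_notMem
    (fun h => left_notMem_leftGrid hac (h₁ ▸ h)) hc hac.le
  have e₂ := clampImage_eq_inter hc hd hcd.le
  have e₃ := clampImage_eq_inter_of_right_notMem
    (fun h => right_notMem_rightGrid hdb (h₃ ▸ h)) hd hdb.le
  rw [e₁, hkc] at h₁
  rw [e₂, hlc] at h₂
  rw [e₃, hmc] at h₃
  rw [e₁, e₂, e₃, hkc, hlc, hmc] at hsum hV
  exact ⟨hsum, h₁, h₂, h₃, hV.trans (inv_mul_gridError a b c d k l m)⟩
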